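/- arXiv:1902.08175 — 2 statements merged into one kernel-verified Lean document; each statement's English description precedes it below -/
import Mathlib

section
/- Lipschitz continuity of the dynamic Preisach operator (Lemma 3.1, first property): Let ρ₀ > 0, 𝒯 := {(ρ₁,ρ₂) ∈ ℝ² : −ρ₀ ≤ ρ₁ ≤ ρ₂ ≤ ρ₀} and p ∈ L¹(𝒯) with p > 0 a.e. Let u₁, u₂ ∈ L²(0,T), let ξ₁, ξ₂ : 𝒯 → [−1,1] be measurable, and for a.e. ρ ∈ 𝒯 with ρ₁ < ρ₂ let y_ρ¹, y_ρ² be the dynamic relay solutions for (u₁, ξ₁(ρ)) and (u₂, ξ₂(ρ)) respectively, with thresholds ρ₁, ρ₂ and slope k; assume ρ ↦ y_ρⁱ(t) is measurable for each t. Then sup_{t∈[0,T]} | ∫_𝒯 y_ρ¹(t)·p(ρ) dρ − ∫_𝒯 y_ρ²(t)·p(ρ) dρ | ≤ e^{T/2}·( ∫_𝒯 |ξ₁(ρ) − ξ₂(ρ)|·p(ρ) dρ + k·‖u₁ − u₂‖_{L²(0,T)}·∫_𝒯 p(ρ) dρ ). -/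
/-!
For fixed thresholds, the difference `w = y₁ - y₂` of two relay solutions satisfies
`w' w ≤ (g(u₁) - g(u₂)) w`, by monotonicity of the normal cone of `[-1, 1]`. Since `g` is
`k`-Lipschitz, `(w²)' ≤ w² + k² (u₁ - u₂)²` a.e.; as `w²` is absolutely continuous this integrates
to `w(t)² ≤ w(0)² + k² ‖u₁ - u₂‖² + ∫₀ᵗ w²`, and Grönwall gives
`|w(t)| ≤ e^{T/2} (|ξ₁ - ξ₂| + k ‖u₁ - u₂‖)`. The diagonal `ρ₁ = ρ₂` is null, so this bound holds
for a.e. `ρ` in the triangle, and integrating it against `p ≥ 0` gives the estimate.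
-/

open MeasureTheory Set

/-- The function `g(u) = k·(u − ρ₂)⁺ − k·(ρ₁ − u)⁺` driving the dynamic relay. -/
noncomputable def relayG (ρ₁ ρ₂ k u : ℝ) : ℝ :=
  k * max (u - ρ₂) 0 - k * max (ρ₁ - u) 0

/-- `y` (with a.e. derivative `y'`) is a dynamic relay solution on `[0,T]` for input `u`
and initial state `ξ`: `y ∈ H¹(0,T)` (encoded by `y' ∈ L²(0,T)` together with the
fundamental-theorem-of-calculus representation), `y(0) = ξ`, `|y| ≤ 1` on `[0,T]`, and
`q(t) := g(u(t)) − y'(t)` satisfies `q(t)(z − y(t)) ≤ 0` for all `z ∈ [−1,1]`, a.e. `t`. -/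
def IsDynRelay (T ρ₁ ρ₂ k : ℝ) (u : ℝ → ℝ) (ξ : ℝ) (y y' : ℝ → ℝ) : Prop :=
  MemLp y' 2 (volume.restrict (Ioc (0:ℝ) T)) ∧
  y 0 = ξ ∧
  (∀ t ∈ Icc (0:ℝ) T, y t = ξ + ∫ s in (0:ℝ)..t, y' s) ∧
  (∀ t ∈ Icc (0:ℝ) T, |y t| ≤ 1) ∧
  (∀ᵐ t ∂(volume.restrict (Ioo (0:ℝ) T)),
    ∀ z ∈ Icc (-1:ℝ) 1, (relayG ρ₁ ρ₂ k (u t) - y' t) * (z - y t) ≤ 0)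

/-- The Preisach triangle `𝒯 = {(ρ₁,ρ₂) : −ρ₀ ≤ ρ₁ ≤ ρ₂ ≤ ρ₀}`. -/
def PreisachTriangle (ρ₀ : ℝ) : Set (ℝ × ℝ) :=
  {ρ : ℝ × ℝ | -ρ₀ ≤ ρ.1 ∧ ρ.1 ≤ ρ.2 ∧ ρ.2 ≤ ρ₀}

theorem sq_add_intervalIntegral {h : ℝ → ℝ} {a b : ℝ} (c : ℝ)
    (hh : IntervalIntegrable h volume a b) :
    (c + ∫ s in a..b, h s) ^ 2 = c ^ 2 + ∫ s in a..b, 2 * (c + ∫ r in a..s, h r) * h s := by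
  set W : ℝ → ℝ := fun x ↦ c + ∫ r in a..x, h r
  have hW : AbsolutelyContinuousOnInterval W a b :=
    (LipschitzWith.const c).lipschitzOnWith.absolutelyContinuousOnInterval.fun_add
      (hh.absolutelyContinuousOnInterval_intervalIntegral left_mem_uIcc)
  have hderiv : ∀ᵐ x, x ∈ uIoc a b → deriv W x * W x + W x * deriv W x = 2 * W x * h x := by
    filter_upwards [hh.ae_hasDerivAt_integral] with x hx hxab
    rw [((hx (uIoc_subset_uIcc hxab) a left_mem_uIcc).const_add c).deriv]
    ring
  have hFTC := hW.integral_deriv_mul_eq_sub hW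
  rw [intervalIntegral.integral_congr_ae hderiv] at hFTC
  simp only [W, intervalIntegral.integral_same, add_zero] at hFTC
  linarith

theorem le_mul_exp_of_le_add_mul_integral {φ : ℝ → ℝ} {a b A K : ℝ} (hK : 0 ≤ K)
    (hφ : ContinuousOn φ (Icc a b)) (h : ∀ x ∈ Icc a b, φ x ≤ A + K * ∫ s in a..x, φ s) :
    ∀ x ∈ Icc a b, φ x ≤ A * Real.exp (K * (x - a)) := by
  intro x hx
  have hab : a ≤ b := hx.1.trans hx.2
  -- extend `φ` continuously to `ℝ` so that its primitive is differentiable everywhere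
  set φ' : ℝ → ℝ := fun s ↦ φ (projIcc a b hab s)
  have hφ' : Continuous φ' :=
    hφ.comp_continuous (continuous_subtype_val.comp continuous_projIcc)
      fun s ↦ (projIcc a b hab s).2
  have hprim : ∀ x ∈ Icc a b, ∫ s in a..x, φ' s = ∫ s in a..x, φ s := fun x hx ↦
    intervalIntegral.integral_congr fun s hs ↦ by
      rw [uIcc_of_le hx.1] at hs
      simp only [φ', projIcc_of_mem hab ⟨hs.1, hs.2.trans hx.2⟩]
  have hψ : ∀ x ∈ Icc a b, ∫ s in a..x, φ' s ≤ gronwallBound 0 K A (x - a) := by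
    refine le_gronwallBound_of_liminf_deriv_right_le (f' := φ')
      (fun y _ ↦ (hφ'.integral_hasStrictDerivAt a y).hasDerivAt.continuousAt.continuousWithinAt)
      (fun y _ r hr ↦
        (hφ'.integral_hasStrictDerivAt a y).hasDerivAt.hasDerivWithinAt.liminf_right_slope_le hr)
      (by simp) fun y hy ↦ ?_
    have hy' : y ∈ Icc a b := Ico_subset_Icc_self hy
    simpa [φ', projIcc_of_mem hab hy', hprim y hy', add_comm] using h y hy'
  calc φ x ≤ A + K * gronwallBound 0 K A (x - a) := by
        have := mul_le_mul_of_nonneg_left (hψ x hx) hK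
        rw [hprim x hx] at this
        linarith [h x hx]
    _ = A * Real.exp (K * (x - a)) := by
        rcases hK.eq_or_lt with rfl | hKpos
        · simp [gronwallBound_K0]
        · rw [gronwallBound_of_K_ne_0 hKpos.ne']
          field_simp
          ring

theorem sub_mul_sub_nonneg_of_forall_mul_sub_nonpos {S : Set ℝ} {q₁ q₂ y₁ y₂ : ℝ}
    (hy₁ : y₁ ∈ S) (hy₂ : y₂ ∈ S) (h₁ : ∀ z ∈ S, q₁ * (z - y₁) ≤ 0)
    (h₂ : ∀ z ∈ S, q₂ * (z - y₂) ≤ 0) : 0 ≤ (q₁ - q₂) * (y₁ - y₂) := by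
  nlinarith [h₁ y₂ hy₂, h₂ y₁ hy₁]

theorem abs_integral_mul_sub_integral_mul_le {α : Type*} [MeasurableSpace α] {μ : Measure α}
    {f g B p : α → ℝ} {C : ℝ} (hf : AEStronglyMeasurable f μ) (hg : AEStronglyMeasurable g μ)
    (hfC : ∀ᵐ x ∂μ, |f x| ≤ C) (hgC : ∀ᵐ x ∂μ, |g x| ≤ C) (hp : Integrable p μ)
    (hp0 : ∀ᵐ x ∂μ, 0 ≤ p x) (hB : Integrable (fun x ↦ B x * p x) μ)
    (hfg : ∀ᵐ x ∂μ, |f x - g x| ≤ B x) :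
    |(∫ x, f x * p x ∂μ) - ∫ x, g x * p x ∂μ| ≤ ∫ x, B x * p x ∂μ := by
  have hfp := hp.bdd_mul hf hfC
  have hgp := hp.bdd_mul hg hgC
  rw [← integral_sub hfp hgp]
  refine abs_integral_le_integral_abs.trans (integral_mono_ae (hfp.sub hgp).abs hB ?_)
  filter_upwards [hp0, hfg] with x hx hfgx
  rw [← sub_mul, abs_mul, abs_of_nonneg hx]
  exact mul_le_mul_of_nonneg_right hfgx hx

theorem abs_relayG_sub_le {ρ₁ ρ₂ k : ℝ} (hρ : ρ₁ ≤ ρ₂) (hk : 0 ≤ k) (a b : ℝ) :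
    |relayG ρ₁ ρ₂ k a - relayG ρ₁ ρ₂ k b| ≤ k * |a - b| := by
  unfold relayG
  rw [← mul_sub, ← mul_sub, ← mul_sub, abs_mul, abs_of_nonneg hk]
  refine mul_le_mul_of_nonneg_left ?_ hk
  rw [abs_le]
  rcases abs_cases (a - b) with ⟨h, hab⟩ | ⟨h, hab⟩ <;> rw [h] <;>
  rcases max_cases (a - ρ₂) 0 with h₁ | h₁ <;>
  rcases max_cases (ρ₁ - a) 0 with h₂ | h₂ <;>
  rcases max_cases (b - ρ₂) 0 with h₃ | h₃ <;>
  rcases max_cases (ρ₁ - b) 0 with h₄ | h₄ <;>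
  constructor <;> linarith [hab, h₁.1, h₁.2, h₂.1, h₂.2, h₃.1, h₃.2, h₄.1, h₄.2]

namespace IsDynRelay

variable {T ρ₁ ρ₂ k ξ ξ₁ ξ₂ : ℝ} {u u₁ u₂ y y' y₁ y₁' y₂ y₂' : ℝ → ℝ}

theorem abs_le_one (h : IsDynRelay T ρ₁ ρ₂ k u ξ y y') {t : ℝ} (ht : t ∈ Icc 0 T) :
    |y t| ≤ 1 :=
  h.2.2.2.1 t ht

theorem mem_Icc (h : IsDynRelay T ρ₁ ρ₂ k u ξ y y') {t : ℝ} (ht : t ∈ Icc 0 T) :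
    y t ∈ Icc (-1) 1 :=
  abs_le.1 (h.abs_le_one ht)

theorem abs_init_le_one (h : IsDynRelay T ρ₁ ρ₂ k u ξ y y') (hT : 0 ≤ T) : |ξ| ≤ 1 :=
  h.2.1 ▸ h.abs_le_one ⟨le_rfl, hT⟩

theorem intervalIntegrable_deriv (h : IsDynRelay T ρ₁ ρ₂ k u ξ y y') (hT : 0 ≤ T) :
    IntervalIntegrable y' volume 0 T :=
  (intervalIntegrable_iff_integrableOn_Ioc_of_le hT).2 (h.1.integrable one_le_two)

theorem continuousOn (h : IsDynRelay T ρ₁ ρ₂ k u ξ y y') (hT : 0 ≤ T) :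
    ContinuousOn y (Icc 0 T) := by
  have hprim := (intervalIntegral.continuousOn_primitive_interval'
    (h.intervalIntegrable_deriv hT) left_mem_uIcc).const_add ξ
  rw [uIcc_of_le hT] at hprim
  exact hprim.congr h.2.2.1

theorem sub_eq (h₁ : IsDynRelay T ρ₁ ρ₂ k u₁ ξ₁ y₁ y₁')
    (h₂ : IsDynRelay T ρ₁ ρ₂ k u₂ ξ₂ y₂ y₂') (hT : 0 ≤ T) {x : ℝ} (hx : x ∈ Icc 0 T) :
    y₁ x - y₂ x = (ξ₁ - ξ₂) + ∫ s in (0:ℝ)..x, (y₁' s - y₂' s) := by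
  have hsub : uIcc 0 x ⊆ uIcc 0 T := uIcc_subset_uIcc_left (by rwa [uIcc_of_le hT])
  rw [h₁.2.2.1 x hx, h₂.2.2.1 x hx, intervalIntegral.integral_sub
    ((h₁.intervalIntegrable_deriv hT).mono_set hsub)
    ((h₂.intervalIntegrable_deriv hT).mono_set hsub)]
  ring

theorem sq_sub_eq (h₁ : IsDynRelay T ρ₁ ρ₂ k u₁ ξ₁ y₁ y₁')
    (h₂ : IsDynRelay T ρ₁ ρ₂ k u₂ ξ₂ y₂ y₂') (hT : 0 ≤ T) {x : ℝ} (hx : x ∈ Icc 0 T) :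
    (y₁ x - y₂ x) ^ 2 =
      (ξ₁ - ξ₂) ^ 2 + ∫ s in (0:ℝ)..x, 2 * (y₁ s - y₂ s) * (y₁' s - y₂' s) := by
  have hsub : uIcc 0 x ⊆ uIcc 0 T := uIcc_subset_uIcc_left (by rwa [uIcc_of_le hT])
  rw [h₁.sub_eq h₂ hT hx, sq_add_intervalIntegral _
    (((h₁.intervalIntegrable_deriv hT).sub (h₂.intervalIntegrable_deriv hT)).mono_set hsub)]
  congr 1
  refine intervalIntegral.integral_congr fun s hs ↦ ?_
  rw [uIcc_of_le hx.1] at hs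
  rw [h₁.sub_eq h₂ hT ⟨hs.1, hs.2.trans hx.2⟩]

theorem ae_two_mul_sub_mul_deriv_sub_le (h₁ : IsDynRelay T ρ₁ ρ₂ k u₁ ξ₁ y₁ y₁')
    (h₂ : IsDynRelay T ρ₁ ρ₂ k u₂ ξ₂ y₂ y₂') (hρ : ρ₁ ≤ ρ₂) (hk : 0 ≤ k) :
    ∀ᵐ s ∂volume.restrict (Icc 0 T), 2 * (y₁ s - y₂ s) * (y₁' s - y₂' s) ≤
      (y₁ s - y₂ s) ^ 2 + k ^ 2 * (u₁ s - u₂ s) ^ 2 := by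
  rw [← Measure.restrict_congr_set Ioo_ae_eq_Icc]
  filter_upwards [h₁.2.2.2.2, h₂.2.2.2.2, ae_restrict_mem measurableSet_Ioo] with s hs₁ hs₂ hs
  have hsT : s ∈ Icc 0 T := Ioo_subset_Icc_self hs
  set w := y₁ s - y₂ s
  set g₁ := relayG ρ₁ ρ₂ k (u₁ s)
  set g₂ := relayG ρ₁ ρ₂ k (u₂ s)
  have hmono : 0 ≤ ((g₁ - y₁' s) - (g₂ - y₂' s)) * w :=
    sub_mul_sub_nonneg_of_forall_mul_sub_nonpos (h₁.mem_Icc hsT) (h₂.mem_Icc hsT) hs₁ hs₂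
  have hlip : (g₁ - g₂) * w ≤ k * |u₁ s - u₂ s| * |w| :=
    calc (g₁ - g₂) * w ≤ |g₁ - g₂| * |w| := by rw [← abs_mul]; exact le_abs_self _
      _ ≤ k * |u₁ s - u₂ s| * |w| := by gcongr; exact abs_relayG_sub_le hρ hk _ _
  nlinarith [two_mul_le_add_sq (k * |u₁ s - u₂ s|) |w|, sq_abs w, sq_abs (u₁ s - u₂ s)]

theorem sq_sub_le (h₁ : IsDynRelay T ρ₁ ρ₂ k u₁ ξ₁ y₁ y₁')
    (h₂ : IsDynRelay T ρ₁ ρ₂ k u₂ ξ₂ y₂ y₂') (hT : 0 ≤ T) (hρ : ρ₁ ≤ ρ₂) (hk : 0 ≤ k)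
    (hu : IntervalIntegrable (fun s ↦ (u₁ s - u₂ s) ^ 2) volume 0 T) :
    ∀ x ∈ Icc 0 T, (y₁ x - y₂ x) ^ 2 ≤
      ((ξ₁ - ξ₂) ^ 2 + k ^ 2 * ∫ s in (0:ℝ)..T, (u₁ s - u₂ s) ^ 2) +
        1 * ∫ s in (0:ℝ)..x, (y₁ s - y₂ s) ^ 2 := by
  intro x hx
  have hIcc : Icc 0 x ⊆ Icc 0 T := Icc_subset_Icc_right hx.2
  have huIcc : uIcc 0 x ⊆ uIcc 0 T := by rwa [uIcc_of_le hx.1, uIcc_of_le hT]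
  have hw : ContinuousOn (fun s ↦ y₁ s - y₂ s) (Icc 0 x) :=
    ((h₁.continuousOn hT).sub (h₂.continuousOn hT)).mono hIcc
  have hw_int : IntervalIntegrable (fun s ↦ (y₁ s - y₂ s) ^ 2) volume 0 x :=
    (hw.pow 2).intervalIntegrable_of_Icc hx.1
  have hu_int : IntervalIntegrable (fun s ↦ (u₁ s - u₂ s) ^ 2) volume 0 x := hu.mono_set huIcc
  have hwh_int : IntervalIntegrable (fun s ↦ 2 * (y₁ s - y₂ s) * (y₁' s - y₂' s)) volume 0 x :=
    (((h₁.intervalIntegrable_deriv hT).sub (h₂.intervalIntegrable_deriv hT)).mono_set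
      huIcc).continuousOn_mul (by rw [uIcc_of_le hx.1]; exact hw.const_smul (2 : ℝ))
  rw [h₁.sq_sub_eq h₂ hT hx]
  calc (ξ₁ - ξ₂) ^ 2 + ∫ s in (0:ℝ)..x, 2 * (y₁ s - y₂ s) * (y₁' s - y₂' s)
      ≤ (ξ₁ - ξ₂) ^ 2 + ∫ s in (0:ℝ)..x, ((y₁ s - y₂ s) ^ 2 + k ^ 2 * (u₁ s - u₂ s) ^ 2) := by
        gcongr
        exact intervalIntegral.integral_mono_ae_restrict hx.1 hwh_int
          (hw_int.add (hu_int.const_mul _)) (ae_restrict_of_ae_restrict_of_subset hIcc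
            (h₁.ae_two_mul_sub_mul_deriv_sub_le h₂ hρ hk))
    _ = ((ξ₁ - ξ₂) ^ 2 + k ^ 2 * ∫ s in (0:ℝ)..x, (u₁ s - u₂ s) ^ 2) +
          1 * ∫ s in (0:ℝ)..x, (y₁ s - y₂ s) ^ 2 := by
        rw [intervalIntegral.integral_add hw_int (hu_int.const_mul _),
          intervalIntegral.integral_const_mul]
        ring
    _ ≤ _ := by
        gcongr
        exact intervalIntegral.integral_mono_interval le_rfl hx.1 hx.2
          (Filter.Eventually.of_forall fun _ ↦ sq_nonneg _) hu

theorem abs_sub_le (h₁ : IsDynRelay T ρ₁ ρ₂ k u₁ ξ₁ y₁ y₁')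
    (h₂ : IsDynRelay T ρ₁ ρ₂ k u₂ ξ₂ y₂ y₂') (hT : 0 ≤ T) (hρ : ρ₁ ≤ ρ₂) (hk : 0 ≤ k)
    (hu : IntervalIntegrable (fun s ↦ (u₁ s - u₂ s) ^ 2) volume 0 T)
    {t : ℝ} (ht : t ∈ Icc 0 T) :
    |y₁ t - y₂ t| ≤
      Real.exp (T / 2) * (|ξ₁ - ξ₂| + k * Real.sqrt (∫ s in (0:ℝ)..T, (u₁ s - u₂ s) ^ 2)) := by
  set N := ∫ s in (0:ℝ)..T, (u₁ s - u₂ s) ^ 2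
  have hN : 0 ≤ N := intervalIntegral.integral_nonneg hT fun _ _ ↦ sq_nonneg _
  have hgronwall := le_mul_exp_of_le_add_mul_integral zero_le_one
    (((h₁.continuousOn hT).sub (h₂.continuousOn hT)).pow 2) (h₁.sq_sub_le h₂ hT hρ hk hu) t ht
  refine abs_le_of_sq_le_sq ?_ (by positivity)
  have hexp : Real.exp (T / 2) ^ 2 = Real.exp T := by rw [← Real.exp_nat_mul]; ring_nf
  calc (y₁ t - y₂ t) ^ 2 ≤ ((ξ₁ - ξ₂) ^ 2 + k ^ 2 * N) * Real.exp (1 * (t - 0)) := hgronwall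
    _ ≤ (|ξ₁ - ξ₂| + k * Real.sqrt N) ^ 2 * Real.exp T := by
        gcongr
        · rw [add_sq, sq_abs, mul_pow, Real.sq_sqrt hN, add_right_comm]
          exact le_add_of_nonneg_right (by positivity)
        · linarith [ht.2]
    _ = (Real.exp (T / 2) * (|ξ₁ - ξ₂| + k * Real.sqrt N)) ^ 2 := by rw [mul_pow, hexp, mul_comm]

end IsDynRelay

theorem measurableSet_preisachTriangle (ρ₀ : ℝ) : MeasurableSet (PreisachTriangle ρ₀) :=
  (measurableSet_le measurable_const measurable_fst).inter
    ((measurableSet_le measurable_fst measurable_snd).inter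
      (measurableSet_le measurable_snd measurable_const))

theorem ae_fst_lt_snd_preisachTriangle (ρ₀ : ℝ) :
    ∀ᵐ ρ ∂volume.restrict (PreisachTriangle ρ₀), ρ.1 < ρ.2 := by
  have hdiag : ∀ᵐ ρ : ℝ × ℝ, ρ.1 ≠ ρ.2 := by
    simp only [ae_iff, ne_eq, not_not]
    rw [Measure.volume_eq_prod,
      Measure.measure_prod_null (measurableSet_eq_fun measurable_fst measurable_snd)]
    filter_upwards with x
    simp [preimage, measure_singleton]
  filter_upwards [ae_restrict_of_ae hdiag, ae_restrict_mem (measurableSet_preisachTriangle ρ₀)]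
    with ρ hne hρ
  exact lt_of_le_of_ne hρ.2.1 hne

theorem dyn_preisach_lipschitz_general (T k ρ₀ : ℝ) (hT : 0 < T) (hk : 0 < k)
    (p : ℝ × ℝ → ℝ) (hp : IntegrableOn p (PreisachTriangle ρ₀))
    (hppos : ∀ᵐ ρ ∂(volume.restrict (PreisachTriangle ρ₀)), 0 < p ρ)
    (u₁ u₂ : ℝ → ℝ)
    (hu₁ : MemLp u₁ 2 (volume.restrict (Ioc (0:ℝ) T)))
    (hu₂ : MemLp u₂ 2 (volume.restrict (Ioc (0:ℝ) T)))
    (ξ₁ ξ₂ : ℝ × ℝ → ℝ) (hξ₁m : Measurable ξ₁) (hξ₂m : Measurable ξ₂)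
    (y₁ y₂ : ℝ × ℝ → ℝ → ℝ)
    (hy₁ : ∀ᵐ ρ ∂(volume.restrict (PreisachTriangle ρ₀)), ρ.1 < ρ.2 →
      ∃ y' : ℝ → ℝ, IsDynRelay T ρ.1 ρ.2 k u₁ (ξ₁ ρ) (y₁ ρ) y')
    (hy₂ : ∀ᵐ ρ ∂(volume.restrict (PreisachTriangle ρ₀)), ρ.1 < ρ.2 →
      ∃ y' : ℝ → ℝ, IsDynRelay T ρ.1 ρ.2 k u₂ (ξ₂ ρ) (y₂ ρ) y')
    (hmeas₁ : ∀ t ∈ Icc (0:ℝ) T,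
      AEStronglyMeasurable (fun ρ => y₁ ρ t) (volume.restrict (PreisachTriangle ρ₀)))
    (hmeas₂ : ∀ t ∈ Icc (0:ℝ) T,
      AEStronglyMeasurable (fun ρ => y₂ ρ t) (volume.restrict (PreisachTriangle ρ₀))) :
    ∀ t ∈ Icc (0:ℝ) T,
      |(∫ ρ in PreisachTriangle ρ₀, y₁ ρ t * p ρ) -
        (∫ ρ in PreisachTriangle ρ₀, y₂ ρ t * p ρ)| ≤
      Real.exp (T / 2) *
        ((∫ ρ in PreisachTriangle ρ₀, |ξ₁ ρ - ξ₂ ρ| * p ρ) +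
          k * Real.sqrt (∫ s in (0:ℝ)..T, (u₁ s - u₂ s) ^ 2) *
            ∫ ρ in PreisachTriangle ρ₀, p ρ) := by
  intro t ht
  set S := Real.sqrt (∫ s in (0:ℝ)..T, (u₁ s - u₂ s) ^ 2)
  have hu : IntervalIntegrable (fun s ↦ (u₁ s - u₂ s) ^ 2) volume 0 T :=
    (intervalIntegrable_iff_integrableOn_Ioc_of_le hT.le).2 (hu₁.sub hu₂).integrable_sq
  have hrelay : ∀ᵐ ρ ∂volume.restrict (PreisachTriangle ρ₀),
      |y₁ ρ t| ≤ 1 ∧ |y₂ ρ t| ≤ 1 ∧ |ξ₁ ρ - ξ₂ ρ| ≤ 2 ∧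
        |y₁ ρ t - y₂ ρ t| ≤ Real.exp (T / 2) * (|ξ₁ ρ - ξ₂ ρ| + k * S) := by
    filter_upwards [hy₁, hy₂, ae_fst_lt_snd_preisachTriangle ρ₀] with ρ hρ₁ hρ₂ hρ
    obtain ⟨y₁', h₁⟩ := hρ₁ hρ
    obtain ⟨y₂', h₂⟩ := hρ₂ hρ
    refine ⟨h₁.abs_le_one ht, h₂.abs_le_one ht, ?_, h₁.abs_sub_le h₂ hT.le hρ.le hk.le hu ht⟩
    linarith [abs_sub (ξ₁ ρ) (ξ₂ ρ), h₁.abs_init_le_one hT.le, h₂.abs_init_le_one hT.le]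
  have hξp : Integrable (fun ρ ↦ |ξ₁ ρ - ξ₂ ρ| * p ρ) (volume.restrict (PreisachTriangle ρ₀)) :=
    hp.bdd_mul (hξ₁m.sub hξ₂m).abs.aestronglyMeasurable
      (hrelay.mono fun _ h ↦ by simpa using h.2.2.1)
  have hBp : (fun ρ ↦ Real.exp (T / 2) * (|ξ₁ ρ - ξ₂ ρ| + k * S) * p ρ) =
      fun ρ ↦ Real.exp (T / 2) * (|ξ₁ ρ - ξ₂ ρ| * p ρ + k * S * p ρ) := by
    ext; ring
  calc _ ≤ ∫ ρ in PreisachTriangle ρ₀, Real.exp (T / 2) * (|ξ₁ ρ - ξ₂ ρ| + k * S) * p ρ :=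
        abs_integral_mul_sub_integral_mul_le (hmeas₁ t ht) (hmeas₂ t ht)
          (hrelay.mono fun _ h ↦ h.1) (hrelay.mono fun _ h ↦ h.2.1) hp
          (hppos.mono fun _ h ↦ h.le) (by rw [hBp]; exact (hξp.add (hp.const_mul _)).const_mul _)
          (hrelay.mono fun _ h ↦ h.2.2.2)
    _ = _ := by
        rw [hBp, integral_const_mul, integral_add hξp (hp.const_mul _), integral_const_mul]

/-- Lipschitz continuity of the dynamic Preisach operator (Lemma 3.1, first property). -/
theorem dyn_preisach_lipschitz (T k ρ₀ : ℝ) (hT : 0 < T) (hk : 0 < k) (hρ₀ : 0 < ρ₀)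
    (p : ℝ × ℝ → ℝ) (hp : IntegrableOn p (PreisachTriangle ρ₀))
    (hppos : ∀ᵐ ρ ∂(volume.restrict (PreisachTriangle ρ₀)), 0 < p ρ)
    (u₁ u₂ : ℝ → ℝ)
    (hu₁ : MemLp u₁ 2 (volume.restrict (Ioc (0:ℝ) T)))
    (hu₂ : MemLp u₂ 2 (volume.restrict (Ioc (0:ℝ) T)))
    (ξ₁ ξ₂ : ℝ × ℝ → ℝ) (hξ₁m : Measurable ξ₁) (hξ₂m : Measurable ξ₂)
    (hξ₁ : ∀ ρ, ξ₁ ρ ∈ Icc (-1:ℝ) 1) (hξ₂ : ∀ ρ, ξ₂ ρ ∈ Icc (-1:ℝ) 1)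
    (y₁ y₂ : ℝ × ℝ → ℝ → ℝ)
    (hy₁ : ∀ᵐ ρ ∂(volume.restrict (PreisachTriangle ρ₀)), ρ.1 < ρ.2 →
      ∃ y' : ℝ → ℝ, IsDynRelay T ρ.1 ρ.2 k u₁ (ξ₁ ρ) (y₁ ρ) y')
    (hy₂ : ∀ᵐ ρ ∂(volume.restrict (PreisachTriangle ρ₀)), ρ.1 < ρ.2 →
      ∃ y' : ℝ → ℝ, IsDynRelay T ρ.1 ρ.2 k u₂ (ξ₂ ρ) (y₂ ρ) y')
    (hmeas₁ : ∀ t ∈ Icc (0:ℝ) T,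
      AEStronglyMeasurable (fun ρ => y₁ ρ t) (volume.restrict (PreisachTriangle ρ₀)))
    (hmeas₂ : ∀ t ∈ Icc (0:ℝ) T,
      AEStronglyMeasurable (fun ρ => y₂ ρ t) (volume.restrict (PreisachTriangle ρ₀))) :
    ∀ t ∈ Icc (0:ℝ) T,
      |(∫ ρ in PreisachTriangle ρ₀, y₁ ρ t * p ρ) -
        (∫ ρ in PreisachTriangle ρ₀, y₂ ρ t * p ρ)| ≤
      Real.exp (T / 2) *
        ((∫ ρ in PreisachTriangle ρ₀, |ξ₁ ρ - ξ₂ ρ| * p ρ) +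
          k * Real.sqrt (∫ s in (0:ℝ)..T, (u₁ s - u₂ s) ^ 2) *
            ∫ ρ in PreisachTriangle ρ₀, p ρ) :=
  dyn_preisach_lipschitz_general T k ρ₀ hT hk p hp hppos u₁ u₂ hu₁ hu₂ ξ₁ ξ₂ hξ₁m hξ₂m y₁ y₂ hy₁ hy₂
    hmeas₁ hmeas₂
end

section
/- Order preservation of the dynamic Preisach operator (Lemma 3.1, order-preserving property): Let ρ₀ > 0, 𝒯 := {(ρ₁,ρ₂) ∈ ℝ² : −ρ₀ ≤ ρ₁ ≤ ρ₂ ≤ ρ₀} and p ∈ L¹(𝒯) with p > 0 a.e. Let u₁, u₂ ∈ L²(0,T) with u₁ ≤ u₂ a.e. in [0,T], and let ξ₁, ξ₂ : 𝒯 → [−1,1] be measurable with ξ₁(ρ) ≤ ξ₂(ρ) for a.e. ρ ∈ 𝒯. For a.e. ρ ∈ 𝒯 with ρ₁ < ρ₂ let y_ρ¹, y_ρ² be the dynamic relay solutions for (u₁, ξ₁(ρ)) and (u₂, ξ₂(ρ)) respectively, with thresholds ρ₁, ρ₂ and slope k; assume ρ ↦ y_ρⁱ(t) is measurable for each t. Then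 for every t ∈ [0,T], ∫_𝒯 y_ρ¹(t)·p(ρ) dρ ≤ ∫_𝒯 y_ρ²(t)·p(ρ) dρ. -/
open MeasureTheory Set

/-! For fixed thresholds the two relay solutions are ordered: where `y₁ > y₂`, testing each
variational inequality with the other solution gives `y₁' ≤ g(u₁) ≤ g(u₂) ≤ y₂'`, so `y₁ − y₂`,
which starts nonpositive, can never become positive. The diagonal `ρ₁ = ρ₂` is Lebesgue-null, so
this holds for a.e. `ρ ∈ 𝒯`, and integrating against `p > 0` gives the claim. -/

theorem relayG_monotone (ρ₁ ρ₂ : ℝ) {k : ℝ} (hk : 0 ≤ k) : Monotone (relayG ρ₁ ρ₂ k) := by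
  intro a b hab
  have h₁ : max (a - ρ₂) 0 ≤ max (b - ρ₂) 0 := by gcongr
  have h₂ : max (ρ₁ - b) 0 ≤ max (ρ₁ - a) 0 := by gcongr
  unfold relayG
  nlinarith

theorem ContinuousOn.exists_nonpos_forall_pos_Ioc {w : ℝ → ℝ} {a t : ℝ} (hat : a ≤ t)
    (hw : ContinuousOn w (Icc a t)) (ha : w a ≤ 0) (ht : 0 < w t) :
    ∃ s ∈ Ico a t, w s ≤ 0 ∧ ∀ r ∈ Ioc s t, 0 < w r := by
  set S := Icc a t ∩ w ⁻¹' Iic 0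
  have hS : IsClosed S := hw.preimage_isClosed_of_isClosed isClosed_Icc isClosed_Iic
  have hSbdd : BddAbove S := ⟨t, fun r hr => hr.1.2⟩
  have hsS : sSup S ∈ S := hS.csSup_mem ⟨a, ⟨le_rfl, hat⟩, ha⟩ hSbdd
  refine ⟨sSup S, ⟨hsS.1.1, hsS.1.2.lt_of_ne ?_⟩, hsS.2, fun r hr => ?_⟩
  · rintro h
    exact (hsS.2.trans_lt (h ▸ ht)).false
  · by_contra! hwr
    exact hr.1.not_ge (le_csSup hSbdd ⟨⟨hsS.1.1.trans hr.1.le, hr.2⟩, hwr⟩)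

theorem nonpos_of_eq_add_integral {a b w₀ : ℝ} {w w' : ℝ → ℝ}
    (hw' : IntegrableOn w' (Ioc a b)) (hw : ∀ t ∈ Icc a b, w t = w₀ + ∫ s in a..t, w' s)
    (hw₀ : w₀ ≤ 0) (hder : ∀ᵐ t ∂volume.restrict (Ioo a b), 0 < w t → w' t ≤ 0) :
    ∀ t ∈ Icc a b, w t ≤ 0 := by
  have hint : ∀ {s t}, a ≤ s → s ≤ t → t ≤ b → IntervalIntegrable w' volume s t :=
    fun has hst htb => (intervalIntegrable_iff_integrableOn_Ioc_of_le hst).2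
      (hw'.mono_set (Ioc_subset_Ioc has htb))
  intro t ht
  by_contra! hpos
  have hcont : ContinuousOn w (Icc a t) := by
    have := intervalIntegral.continuousOn_primitive_interval' (hint le_rfl ht.1 ht.2)
      left_mem_uIcc
    rw [uIcc_of_le ht.1] at this
    exact (continuousOn_const.add this).congr fun r hr => hw r ⟨hr.1, hr.2.trans ht.2⟩
  have hwa : w a ≤ 0 := by simpa [hw a ⟨le_rfl, ht.1.trans ht.2⟩] using hw₀
  obtain ⟨s, hs, hws, hpos_on⟩ := hcont.exists_nonpos_forall_pos_Ioc ht.1 hwa hpos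
  have hincr : w t - w s = ∫ r in s..t, w' r := by
    rw [hw t ht, hw s ⟨hs.1, hs.2.le.trans ht.2⟩, add_sub_add_left_eq_sub,
      intervalIntegral.integral_interval_sub_left (hint le_rfl ht.1 ht.2)
        (hint le_rfl hs.1 (hs.2.le.trans ht.2))]
  have hnonpos : ∫ r in s..t, w' r ≤ 0 := by
    rw [intervalIntegral.integral_of_le hs.2.le, integral_Ioc_eq_integral_Ioo]
    refine setIntegral_nonpos_of_ae_restrict ?_
    filter_upwards [ae_restrict_of_ae_restrict_of_subset (Ioo_subset_Ioo hs.1 ht.2) hder,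
      ae_restrict_mem measurableSet_Ioo] with r hr hrmem
    exact hr (hpos_on r (Ioo_subset_Ioc_self hrmem))
  linarith

theorem IsDynRelay.mem_Icc_s16 {T ρ₁ ρ₂ k ξ : ℝ} {u y y' : ℝ → ℝ}
    (h : IsDynRelay T ρ₁ ρ₂ k u ξ y y') : ∀ t ∈ Icc 0 T, y t ∈ Icc (-1) 1 :=
  fun t ht => abs_le.1 (h.2.2.2.1 t ht)

theorem IsDynRelay.mono {T ρ₁ ρ₂ k ξ₁ ξ₂ : ℝ} {u₁ u₂ y₁ y₂ y₁' y₂' : ℝ → ℝ} (hk : 0 ≤ k)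
    (hu : ∀ᵐ t ∂volume.restrict (Ioo 0 T), u₁ t ≤ u₂ t) (hξ : ξ₁ ≤ ξ₂)
    (h₁ : IsDynRelay T ρ₁ ρ₂ k u₁ ξ₁ y₁ y₁') (h₂ : IsDynRelay T ρ₁ ρ₂ k u₂ ξ₂ y₂ y₂') :
    ∀ t ∈ Icc 0 T, y₁ t ≤ y₂ t := by
  have hy₁ := h₁.mem_Icc_s16
  have hy₂ := h₂.mem_Icc_s16
  obtain ⟨hL₁, -, hrep₁, -, hvi₁⟩ := h₁
  obtain ⟨hL₂, -, hrep₂, -, hvi₂⟩ := h₂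
  have hi₁ : IntegrableOn y₁' (Ioc 0 T) := hL₁.integrable one_le_two
  have hi₂ : IntegrableOn y₂' (Ioc 0 T) := hL₂.integrable one_le_two
  have hrep : ∀ t ∈ Icc 0 T, y₁ t - y₂ t = (ξ₁ - ξ₂) + ∫ s in (0:ℝ)..t, (y₁' s - y₂' s) := by
    intro t ht
    have hint : ∀ {f : ℝ → ℝ}, IntegrableOn f (Ioc 0 T) → IntervalIntegrable f volume 0 t :=
      fun hf => (intervalIntegrable_iff_integrableOn_Ioc_of_le ht.1).2
        (hf.mono_set (Ioc_subset_Ioc_right ht.2))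
    rw [hrep₁ t ht, hrep₂ t ht, intervalIntegral.integral_sub (hint hi₁) (hint hi₂)]
    ring
  have hder : ∀ᵐ t ∂volume.restrict (Ioo 0 T), 0 < y₁ t - y₂ t → y₁' t - y₂' t ≤ 0 := by
    filter_upwards [hvi₁, hvi₂, hu, ae_restrict_mem measurableSet_Ioo]
      with t hvi₁ hvi₂ hu ht hlt
    have h₁ := hvi₁ (y₂ t) (hy₂ t (Ioo_subset_Icc_self ht))
    have h₂ := hvi₂ (y₁ t) (hy₁ t (Ioo_subset_Icc_self ht))
    have hg := relayG_monotone ρ₁ ρ₂ hk hu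
    nlinarith
  intro t ht
  exact sub_nonpos.1 (nonpos_of_eq_add_integral (hi₁.sub hi₂) hrep (sub_nonpos.2 hξ) hder t ht)

theorem volume_setOf_fst_eq_snd : volume {ρ : ℝ × ℝ | ρ.1 = ρ.2} = 0 := by
  rw [Measure.volume_eq_prod,
    Measure.prod_apply (measurableSet_eq_fun measurable_fst measurable_snd)]
  have hslice : ∀ x : ℝ, Prod.mk x ⁻¹' {ρ : ℝ × ℝ | ρ.1 = ρ.2} = {x} := fun x => by
    ext y
    simp [eq_comm]
  simp [hslice]

theorem dyn_preisach_order_preservation_general (T k ρ₀ : ℝ) (hk : 0 < k)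
    (p : ℝ × ℝ → ℝ) (hp : IntegrableOn p (PreisachTriangle ρ₀))
    (hppos : ∀ᵐ ρ ∂(volume.restrict (PreisachTriangle ρ₀)), 0 < p ρ)
    (u₁ u₂ : ℝ → ℝ)
    (hule : ∀ᵐ t ∂(volume.restrict (Icc (0:ℝ) T)), u₁ t ≤ u₂ t)
    (ξ₁ ξ₂ : ℝ × ℝ → ℝ)
    (hξle : ∀ᵐ ρ ∂(volume.restrict (PreisachTriangle ρ₀)), ξ₁ ρ ≤ ξ₂ ρ)
    (y₁ y₂ : ℝ × ℝ → ℝ → ℝ)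
    (hy₁ : ∀ᵐ ρ ∂(volume.restrict (PreisachTriangle ρ₀)), ρ.1 < ρ.2 →
      ∃ y' : ℝ → ℝ, IsDynRelay T ρ.1 ρ.2 k u₁ (ξ₁ ρ) (y₁ ρ) y')
    (hy₂ : ∀ᵐ ρ ∂(volume.restrict (PreisachTriangle ρ₀)), ρ.1 < ρ.2 →
      ∃ y' : ℝ → ℝ, IsDynRelay T ρ.1 ρ.2 k u₂ (ξ₂ ρ) (y₂ ρ) y')
    (hmeas₁ : ∀ t ∈ Icc (0:ℝ) T,
      AEStronglyMeasurable (fun ρ => y₁ ρ t) (volume.restrict (PreisachTriangle ρ₀)))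
    (hmeas₂ : ∀ t ∈ Icc (0:ℝ) T,
      AEStronglyMeasurable (fun ρ => y₂ ρ t) (volume.restrict (PreisachTriangle ρ₀))) :
    ∀ t ∈ Icc (0:ℝ) T,
      (∫ ρ in PreisachTriangle ρ₀, y₁ ρ t * p ρ) ≤
        ∫ ρ in PreisachTriangle ρ₀, y₂ ρ t * p ρ := by
  intro t ht
  have hu : ∀ᵐ s ∂volume.restrict (Ioo 0 T), u₁ s ≤ u₂ s :=
    ae_restrict_of_ae_restrict_of_subset Ioo_subset_Icc_self hule
  have hrelay : ∀ᵐ ρ ∂volume.restrict (PreisachTriangle ρ₀),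
      y₁ ρ t ∈ Icc (-1) 1 ∧ y₂ ρ t ∈ Icc (-1) 1 ∧ y₁ ρ t ≤ y₂ ρ t := by
    filter_upwards [hy₁, hy₂, hξle, ae_fst_lt_snd_preisachTriangle ρ₀]
      with ρ hy₁ hy₂ hξ hlt
    obtain ⟨y₁', h₁⟩ := hy₁ hlt
    obtain ⟨y₂', h₂⟩ := hy₂ hlt
    exact ⟨h₁.mem_Icc_s16 t ht, h₂.mem_Icc_s16 t ht, h₁.mono hk.le hu hξ h₂ t ht⟩
  have hint : ∀ {y : ℝ × ℝ → ℝ}, AEStronglyMeasurable y (volume.restrict (PreisachTriangle ρ₀)) →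
      (∀ᵐ ρ ∂volume.restrict (PreisachTriangle ρ₀), y ρ ∈ Icc (-1) 1) →
      IntegrableOn (fun ρ => y ρ * p ρ) (PreisachTriangle ρ₀) :=
    fun hm hb => hp.bdd_mul (c := 1) hm (hb.mono fun ρ hρ => abs_le.2 hρ)
  refine integral_mono_ae (hint (hmeas₁ t ht) (hrelay.mono fun ρ h => h.1))
    (hint (hmeas₂ t ht) (hrelay.mono fun ρ h => h.2.1)) ?_
  filter_upwards [hrelay, hppos] with ρ hρ hpρ
  exact mul_le_mul_of_nonneg_right hρ.2.2 hpρ.le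

/-- Order preservation of the dynamic Preisach operator (Lemma 3.1). -/
theorem dyn_preisach_order_preservation (T k ρ₀ : ℝ) (hT : 0 < T) (hk : 0 < k) (hρ₀ : 0 < ρ₀)
    (p : ℝ × ℝ → ℝ) (hp : IntegrableOn p (PreisachTriangle ρ₀))
    (hppos : ∀ᵐ ρ ∂(volume.restrict (PreisachTriangle ρ₀)), 0 < p ρ)
    (u₁ u₂ : ℝ → ℝ)
    (hu₁ : MemLp u₁ 2 (volume.restrict (Ioc (0:ℝ) T)))
    (hu₂ : MemLp u₂ 2 (volume.restrict (Ioc (0:ℝ) T)))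
    (hule : ∀ᵐ t ∂(volume.restrict (Icc (0:ℝ) T)), u₁ t ≤ u₂ t)
    (ξ₁ ξ₂ : ℝ × ℝ → ℝ) (hξ₁m : Measurable ξ₁) (hξ₂m : Measurable ξ₂)
    (hξ₁ : ∀ ρ, ξ₁ ρ ∈ Icc (-1:ℝ) 1) (hξ₂ : ∀ ρ, ξ₂ ρ ∈ Icc (-1:ℝ) 1)
    (hξle : ∀ᵐ ρ ∂(volume.restrict (PreisachTriangle ρ₀)), ξ₁ ρ ≤ ξ₂ ρ)
    (y₁ y₂ : ℝ × ℝ → ℝ → ℝ)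
    (hy₁ : ∀ᵐ ρ ∂(volume.restrict (PreisachTriangle ρ₀)), ρ.1 < ρ.2 →
      ∃ y' : ℝ → ℝ, IsDynRelay T ρ.1 ρ.2 k u₁ (ξ₁ ρ) (y₁ ρ) y')
    (hy₂ : ∀ᵐ ρ ∂(volume.restrict (PreisachTriangle ρ₀)), ρ.1 < ρ.2 →
      ∃ y' : ℝ → ℝ, IsDynRelay T ρ.1 ρ.2 k u₂ (ξ₂ ρ) (y₂ ρ) y')
    (hmeas₁ : ∀ t ∈ Icc (0:ℝ) T,
      AEStronglyMeasurable (fun ρ => y₁ ρ t) (volume.restrict (PreisachTriangle ρ₀)))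
    (hmeas₂ : ∀ t ∈ Icc (0:ℝ) T,
      AEStronglyMeasurable (fun ρ => y₂ ρ t) (volume.restrict (PreisachTriangle ρ₀))) :
    ∀ t ∈ Icc (0:ℝ) T,
      (∫ ρ in PreisachTriangle ρ₀, y₁ ρ t * p ρ) ≤
        ∫ ρ in PreisachTriangle ρ₀, y₂ ρ t * p ρ :=
  dyn_preisach_order_preservation_general T k ρ₀ hk p hp hppos u₁ u₂ hule ξ₁ ξ₂ hξle y₁ y₂ hy₁ hy₂
    hmeas₁ hmeas₂
end
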